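/- The Aronszajn–Krein formula: if A is a bounded self-adjoint operator, φ a unit vector, μ and μ_λ the spectral measures of A and A_λ = A + λ⟨φ,·⟩φ with respect to φ, then for all z in the upper half-plane, F_{μ_λ}(z) = F_μ(z)/(1 + λ F_μ(z)), where F_η(z) = ∫ dη(y)/(y − z). -/

import Mathlib

open MeasureTheory Set
open scoped RealInnerProductSpace

/-!
Write `m n = ⟪φ, Aⁿ φ⟫` and `b n = ⟪φ, A_λⁿ φ⟫` for the moments of `μ` and `μ_λ`. Expanding
`A_λⁿ⁺¹ - Aⁿ⁺¹ = ∑ A_λⁱ (λ ⟪φ, ·⟫ φ) Aⁿ⁻ⁱ` gives the convolution recurrence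
`b (n + 1) - m (n + 1) = λ ∑ᵢ b i * m (n - i)`. The moments grow at most like `Kⁿ` with
`K = max ‖A‖ ‖A_λ‖`, so both measures live on `[-K, K]` and for `|z| > K` the Borel transforms
are Laurent series `F(z) = -∑ m n z⁻ⁿ⁻¹`; there the recurrence says exactly
`F_λ - F = -λ F_λ F`. Both sides of the formula are holomorphic on the upper half-plane (where
`Im F > 0` keeps `1 + λ F` away from zero), so the identity theorem extends it from `|z| > K`.
-/

theorem pow_succ_sub_pow_succ_eq_sum {R : Type*} [Ring R] (a b : R) (n : ℕ) :
    b ^ (n + 1) - a ^ (n + 1) = ∑ i ∈ Finset.range (n + 1), b ^ i * (b - a) * a ^ (n - i) := by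
  induction n with
  | zero => simp
  | succ n ih =>
    have hshift : ∑ i ∈ Finset.range (n + 1), b ^ (i + 1) * (b - a) * a ^ (n + 1 - (i + 1))
        = b * (b ^ (n + 1) - a ^ (n + 1)) := by
      rw [ih, Finset.mul_sum]
      simp only [Nat.add_sub_add_right, pow_succ', mul_assoc]
    rw [Finset.sum_range_succ', hshift, pow_succ' b (n + 1), pow_succ' a (n + 1), pow_zero, one_mul,
      Nat.sub_zero, mul_sub, sub_mul]
    abel

section RankOne

variable {𝕜 E : Type*} [RCLike 𝕜] [NormedAddCommGroup E] [InnerProductSpace 𝕜 E]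

theorem inner_add_smul_rankOne_pow_succ_sub (A : E →L[𝕜] E) (φ : E) (l : 𝕜) (n : ℕ) :
    inner 𝕜 φ (((A + l • (innerSL 𝕜 φ).smulRight φ) ^ (n + 1)) φ) - inner 𝕜 φ ((A ^ (n + 1)) φ)
      = l * ∑ i ∈ Finset.range (n + 1),
          inner 𝕜 φ (((A + l • (innerSL 𝕜 φ).smulRight φ) ^ i) φ) *
            inner 𝕜 φ ((A ^ (n - i)) φ) := by
  rw [← inner_sub_right, ← sub_apply, pow_succ_sub_pow_succ_eq_sum,
    add_sub_cancel_left, sum_apply, inner_sum, Finset.mul_sum]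
  refine Finset.sum_congr rfl fun i _ => ?_
  simp only [mul_apply_eq_comp, smul_apply,
    ContinuousLinearMap.smulRight_apply, innerSL_apply_apply, map_smul, inner_smul_right]
  ring

theorem norm_pow_apply_le (S : E →L[𝕜] E) (x : E) (n : ℕ) : ‖(S ^ n) x‖ ≤ ‖S‖ ^ n * ‖x‖ := by
  induction n with
  | zero => simp
  | succ n ih =>
    rw [pow_succ', pow_succ', mul_assoc]
    exact (S.le_opNorm _).trans (by gcongr; exact ih)

theorem norm_inner_pow_apply_le (S : E →L[𝕜] E) (φ : E) (n : ℕ) :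
    ‖inner 𝕜 φ ((S ^ n) φ)‖ ≤ ‖φ‖ ^ 2 * ‖S‖ ^ n :=
  calc ‖inner 𝕜 φ ((S ^ n) φ)‖ ≤ ‖φ‖ * (‖S‖ ^ n * ‖φ‖) :=
        (norm_inner_le_norm _ _).trans (by gcongr; exact norm_pow_apply_le S φ n)
    _ = ‖φ‖ ^ 2 * ‖S‖ ^ n := by ring

end RankOne

noncomputable def borelTransform (ν : Measure ℝ) (z : ℂ) : ℂ := ∫ y, ((y : ℂ) - z)⁻¹ ∂ν

section UpperHalfPlane

variable {z : ℂ}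

theorem im_le_norm_ofReal_sub (y : ℝ) (z : ℂ) : z.im ≤ ‖(y : ℂ) - z‖ :=
  calc z.im ≤ |((y : ℂ) - z).im| := by simp [le_abs_self]
    _ ≤ ‖(y : ℂ) - z‖ := Complex.abs_im_le_norm _

theorem ofReal_sub_ne_zero_of_im_pos (y : ℝ) (hz : 0 < z.im) : (y : ℂ) - z ≠ 0 :=
  norm_pos_iff.mp (hz.trans_le (im_le_norm_ofReal_sub y z))

theorem norm_inv_ofReal_sub_le (y : ℝ) (hz : 0 < z.im) : ‖((y : ℂ) - z)⁻¹‖ ≤ z.im⁻¹ := by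
  rw [norm_inv]
  exact inv_anti₀ hz (im_le_norm_ofReal_sub y z)

theorem im_inv_ofReal_sub_pos (y : ℝ) (hz : 0 < z.im) : 0 < (((y : ℂ) - z)⁻¹).im := by
  have hnormSq : 0 < Complex.normSq ((y : ℂ) - z) :=
    Complex.normSq_pos.mpr (ofReal_sub_ne_zero_of_im_pos y hz)
  rw [Complex.inv_im]
  simpa [neg_div] using div_pos hz hnormSq

variable (ν : Measure ℝ) [IsFiniteMeasure ν]

theorem integrable_inv_ofReal_sub (hz : 0 < z.im) : Integrable (fun y : ℝ => ((y : ℂ) - z)⁻¹) ν :=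
  (integrable_const z.im⁻¹).mono' (by fun_prop)
    (ae_of_all _ fun y => norm_inv_ofReal_sub_le y hz)

theorem borelTransform_im_pos [NeZero ν] (hz : 0 < z.im) : 0 < (borelTransform ν z).im := by
  have hint := integrable_inv_ofReal_sub ν hz
  have him : ∫ y, (((y : ℂ) - z)⁻¹).im ∂ν = (borelTransform ν z).im := integral_im hint
  rw [← him, integral_pos_iff_support_of_nonneg
    (fun y => (im_inv_ofReal_sub_pos y hz).le) hint.im]
  have hsupp : Function.support (fun y : ℝ => (((y : ℂ) - z)⁻¹).im) = univ :=
    eq_univ_of_forall fun y => Function.mem_support.mpr (im_inv_ofReal_sub_pos y hz).ne'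
  rw [hsupp]
  exact Measure.measure_univ_pos.mpr (NeZero.ne ν)

theorem one_add_mul_borelTransform_ne_zero [NeZero ν] (l : ℝ) (hz : 0 < z.im) :
    1 + l * borelTransform ν z ≠ 0 := by
  rcases eq_or_ne l 0 with rfl | hl
  · simp
  · intro h
    have him := congrArg Complex.im h
    simp only [Complex.add_im, Complex.one_im, Complex.mul_im, Complex.ofReal_re,
      Complex.ofReal_im, zero_mul, add_zero, zero_add, Complex.zero_im] at him
    exact mul_ne_zero hl (borelTransform_im_pos ν hz).ne' him

theorem differentiableOn_borelTransform :
    DifferentiableOn ℂ (borelTransform ν) {z | 0 < z.im} := by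
  intro z₀ hz₀
  set ε := z₀.im / 2 with hε_def
  have hε : 0 < ε := half_pos hz₀
  have hball : ∀ z ∈ Metric.ball z₀ ε, ε ≤ z.im := by
    intro z hz
    have := (Complex.abs_im_le_norm (z - z₀)).trans_lt (mem_ball_iff_norm.mp hz)
    rw [Complex.sub_im, abs_lt] at this
    linarith
  have hderiv := hasDerivAt_integral_of_dominated_loc_of_deriv_le (μ := ν)
    (F := fun z (y : ℝ) => ((y : ℂ) - z)⁻¹) (F' := fun z (y : ℝ) => (((y : ℂ) - z) ^ 2)⁻¹)
    (bound := fun _ => (ε ^ 2)⁻¹) (Metric.ball_mem_nhds z₀ hε)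
    (Filter.Eventually.of_forall fun _ => by fun_prop) (integrable_inv_ofReal_sub ν hz₀)
    (by fun_prop) ?_ (integrable_const _) ?_
  · exact hderiv.2.differentiableAt.differentiableWithinAt
  · refine ae_of_all _ fun y z hz => ?_
    rw [norm_inv, norm_pow]
    gcongr
    exact (hball z hz).trans (im_le_norm_ofReal_sub y z)
  · refine ae_of_all _ fun y z hz => ?_
    have hne := ofReal_sub_ne_zero_of_im_pos y (hε.trans_le (hball z hz))
    simpa [Pi.inv_def] using ((hasDerivAt_id z).const_sub (y : ℂ)).inv hne

end UpperHalfPlane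

theorem eqOn_upperHalfPlane_of_eq_of_lt_norm {f g : ℂ → ℂ}
    (hf : DifferentiableOn ℂ f {z | 0 < z.im}) (hg : DifferentiableOn ℂ g {z | 0 < z.im}) {R : ℝ}
    (hfg : ∀ z : ℂ, 0 < z.im → R < ‖z‖ → f z = g z) : EqOn f g {z | 0 < z.im} := by
  have hopen : IsOpen {z : ℂ | 0 < z.im} := isOpen_lt continuous_const Complex.continuous_im
  set z₀ : ℂ := ((|R| + 1 : ℝ) : ℂ) * Complex.I
  have hz₀_im : 0 < z₀.im := by simp [z₀]; positivity
  have hz₀_norm : R < ‖z₀‖ := by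
    simp only [z₀, norm_mul, Complex.norm_I, Complex.norm_real, Real.norm_eq_abs, mul_one]
    rw [abs_of_pos (by positivity)]
    linarith [le_abs_self R]
  have hnear : f =ᶠ[nhds z₀] g := by
    filter_upwards [hopen.mem_nhds hz₀_im, (isOpen_lt continuous_const continuous_norm).mem_nhds
      hz₀_norm] with z hz hzR using hfg z hz hzR
  exact (hf.analyticOnNhd hopen).eqOn_of_preconnected_of_eventuallyEq (hg.analyticOnNhd hopen)
    (convex_halfSpace_im_gt 0).isPreconnected hz₀_im hnear

theorem ae_abs_lt_of_abs_integral_pow_le (ν : Measure ℝ) [IsFiniteMeasure ν] {C K R : ℝ}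
    (hK : 0 ≤ K) (hKR : K < R) (hint : ∀ n, Integrable (fun x : ℝ => x ^ n) ν)
    (hbd : ∀ n, |∫ x, x ^ n ∂ν| ≤ C * K ^ n) : ∀ᵐ x ∂ν, |x| < R := by
  have hR : 0 < R := hK.trans_lt hKR
  -- Markov's inequality for `x ^ (2 n)`
  have hcheb : ∀ n : ℕ, ν.real {x | R ≤ |x|} ≤ C * ((K / R) ^ 2) ^ n := by
    intro n
    have hsub : {x : ℝ | R ≤ |x|} ⊆ {x | R ^ (2 * n) ≤ x ^ (2 * n)} := fun x (hx : R ≤ |x|) => by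
      show R ^ (2 * n) ≤ x ^ (2 * n)
      simpa only [pow_mul, sq_abs] using
        pow_le_pow_left₀ (sq_nonneg R) (pow_le_pow_left₀ hR.le hx 2) n
    have hmarkov := mul_meas_ge_le_integral_of_nonneg
      (ae_of_all _ fun x => (even_two_mul n).pow_nonneg x) (hint (2 * n)) (R ^ (2 * n))
    rw [← pow_mul, div_pow, mul_div_assoc', le_div_iff₀ (by positivity)]
    calc ν.real {x | R ≤ |x|} * R ^ (2 * n)
        ≤ R ^ (2 * n) * ν.real {x | R ^ (2 * n) ≤ x ^ (2 * n)} := by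
          rw [mul_comm]; exact mul_le_mul_of_nonneg_left (measureReal_mono hsub) (by positivity)
      _ ≤ C * K ^ (2 * n) := hmarkov.trans ((le_abs_self _).trans (hbd (2 * n)))
  have hlim : Filter.Tendsto (fun n : ℕ => C * ((K / R) ^ 2) ^ n) Filter.atTop (nhds 0) := by
    simpa using (tendsto_pow_atTop_nhds_zero_of_lt_one (by positivity)
      (pow_lt_one₀ (by positivity) ((div_lt_one hR).mpr hKR) two_ne_zero)).const_mul C
  have hnull : ν.real {x | R ≤ |x|} = 0 :=
    le_antisymm (ge_of_tendsto' hlim hcheb) measureReal_nonneg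
  rw [ae_iff]
  simpa only [not_lt] using ((measureReal_eq_zero_iff (measure_ne_top _ _)).mp hnull)

theorem hasSum_pow_mul_inv_pow {y w : ℂ} (h : ‖y‖ < ‖w‖) :
    HasSum (fun n => y ^ n * w⁻¹ ^ (n + 1)) (w - y)⁻¹ := by
  have hw : w ≠ 0 := norm_pos_iff.mp ((norm_nonneg y).trans_lt h)
  have hratio : ‖y * w⁻¹‖ < 1 := by
    rw [norm_mul, norm_inv, mul_inv_lt_iff₀ (norm_pos_iff.mpr hw), one_mul]
    exact h
  have hsum : (1 - y * w⁻¹)⁻¹ * w⁻¹ = (w - y)⁻¹ := by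
    rw [← mul_inv, sub_mul, one_mul, mul_assoc, inv_mul_cancel₀ hw, mul_one]
  have hterm : (fun n : ℕ => (y * w⁻¹) ^ n * w⁻¹) = fun n => y ^ n * w⁻¹ ^ (n + 1) :=
    funext fun n => by ring
  rw [← hsum, ← hterm]
  exact (hasSum_geometric_of_norm_lt_one hratio).mul_right w⁻¹

theorem hasSum_moment_mul_inv_pow (ν : Measure ℝ) [IsFiniteMeasure ν] {M : ℝ} {w : ℂ}
    (hM : 0 ≤ M) (hMw : M < ‖w‖) (hint : ∀ n, Integrable (fun x : ℝ => x ^ n) ν)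
    (hae : ∀ᵐ y ∂ν, |y| ≤ M) :
    HasSum (fun n => ((∫ x, x ^ n ∂ν : ℝ) : ℂ) * w⁻¹ ^ (n + 1)) (-borelTransform ν w) := by
  set f : ℕ → ℝ → ℂ := fun n y => (y : ℂ) ^ n * w⁻¹ ^ (n + 1)
  have hf_int : ∀ n, Integrable (f n) ν := fun n => by
    simpa [f] using ((hint n).ofReal (𝕜 := ℂ)).mul_const (w⁻¹ ^ (n + 1))
  have hf_bound : ∀ n, ∫ y, ‖f n y‖ ∂ν ≤ ν.real univ * (M ^ n * ‖w‖⁻¹ ^ (n + 1)) := fun n => by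
    have hpt : ∀ᵐ y ∂ν, ‖f n y‖ ≤ M ^ n * ‖w‖⁻¹ ^ (n + 1) := by
      filter_upwards [hae] with y hy
      simp only [f, norm_mul, norm_pow, norm_inv, Complex.norm_real, Real.norm_eq_abs]
      gcongr
    refine (integral_mono_ae (hf_int n).norm (integrable_const _) hpt).trans_eq ?_
    simp [integral_const, smul_eq_mul]
  have hratio : M * ‖w‖⁻¹ < 1 := by
    rwa [← div_eq_mul_inv, div_lt_one (hM.trans_lt hMw)]
  have hsum : Summable fun n => ∫ y, ‖f n y‖ ∂ν :=
    Summable.of_nonneg_of_le (fun n => integral_nonneg fun y => norm_nonneg _) hf_bound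
      (((summable_geometric_of_lt_one (by positivity) hratio).mul_left (ν.real univ * ‖w‖⁻¹)).congr
        fun n => by ring)
  have hpt : ∀ᵐ y ∂ν, HasSum (fun n => f n y) (-((y : ℂ) - w)⁻¹) := by
    filter_upwards [hae] with y hy
    rw [← inv_neg, neg_sub]
    exact hasSum_pow_mul_inv_pow (by simpa using hy.trans_lt hMw)
  have hint_f : ∀ n, ∫ y, f n y ∂ν = ((∫ x, x ^ n ∂ν : ℝ) : ℂ) * w⁻¹ ^ (n + 1) := fun n => by
    simp only [f, integral_mul_const, ← integral_complex_ofReal, Complex.ofReal_pow]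
  have hlim := hasSum_integral_of_summable_integral_norm hf_int hsum
  rw [integral_congr_ae (hpt.mono fun y hy => hy.tsum_eq)] at hlim
  simpa only [hint_f, borelTransform, integral_neg] using hlim

theorem summable_norm_mul_inv_pow {a : ℕ → ℂ} {C K : ℝ} {w : ℂ} (hK : 0 ≤ K) (hKw : K < ‖w‖)
    (ha : ∀ n, ‖a n‖ ≤ C * K ^ n) : Summable fun n => ‖a n * w⁻¹ ^ (n + 1)‖ := by
  have hratio : K * ‖w‖⁻¹ < 1 := by
    rwa [← div_eq_mul_inv, div_lt_one (hK.trans_lt hKw)]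
  refine Summable.of_nonneg_of_le (fun n => norm_nonneg _) (fun n => ?_)
    (((summable_geometric_of_lt_one (by positivity) hratio).mul_left (C * ‖w‖⁻¹)))
  calc ‖a n * w⁻¹ ^ (n + 1)‖ = ‖a n‖ * ‖w‖⁻¹ ^ (n + 1) := by simp
    _ ≤ C * K ^ n * ‖w‖⁻¹ ^ (n + 1) := by gcongr; exact ha n
    _ = C * ‖w‖⁻¹ * (K * ‖w‖⁻¹) ^ n := by ring

theorem sub_eq_mul_mul_of_hasSum_of_recurrence {𝕜 : Type*} [NormedField 𝕜] [CompleteSpace 𝕜]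
    {b m : ℕ → 𝕜} {s P Q l : 𝕜}
    (hP : HasSum (fun n => b n * s ^ (n + 1)) P) (hQ : HasSum (fun n => m n * s ^ (n + 1)) Q)
    (hPn : Summable fun n => ‖b n * s ^ (n + 1)‖) (hQn : Summable fun n => ‖m n * s ^ (n + 1)‖)
    (h0 : b 0 = m 0)
    (hrec : ∀ n, b (n + 1) - m (n + 1) = l * ∑ i ∈ Finset.range (n + 1), b i * m (n - i)) :
    P - Q = l * (P * Q) := by
  have hprod : P * Q = ∑' n, (∑ i ∈ Finset.range (n + 1), b i * m (n - i)) * s ^ (n + 2) := by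
    rw [← hP.tsum_eq, ← hQ.tsum_eq, tsum_mul_tsum_eq_tsum_sum_range_of_summable_norm hPn hQn]
    refine tsum_congr fun n => ?_
    rw [Finset.sum_mul]
    refine Finset.sum_congr rfl fun i hi => ?_
    have hin : i + 1 + (n - i + 1) = n + 2 := by
      have := Finset.mem_range.mp hi
      omega
    rw [mul_mul_mul_comm, ← pow_add, hin]
  have hdiff : HasSum (fun n => (b n - m n) * s ^ (n + 1)) (P - Q) := by
    simpa only [sub_mul] using hP.sub hQ
  rw [← hdiff.tsum_eq, hdiff.summable.tsum_eq_zero_add, h0, sub_self, zero_mul, zero_add, hprod,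
    ← tsum_mul_left]
  refine tsum_congr fun n => ?_
  rw [hrec]
  ring

theorem borelTransform_sub_eq_of_moment_recurrence (ν ν' : Measure ℝ) [IsProbabilityMeasure ν]
    [IsProbabilityMeasure ν'] {C K l : ℝ} (hK : 0 ≤ K)
    (hint : ∀ n, Integrable (fun x : ℝ => x ^ n) ν)
    (hint' : ∀ n, Integrable (fun x : ℝ => x ^ n) ν')
    (hbd : ∀ n, |∫ x, x ^ n ∂ν| ≤ C * K ^ n) (hbd' : ∀ n, |∫ x, x ^ n ∂ν'| ≤ C * K ^ n)
    (hrec : ∀ n, ∫ x, x ^ (n + 1) ∂ν' - ∫ x, x ^ (n + 1) ∂ν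
      = l * ∑ i ∈ Finset.range (n + 1), (∫ x, x ^ i ∂ν') * ∫ x, x ^ (n - i) ∂ν)
    {w : ℂ} (hKw : K < ‖w‖) :
    borelTransform ν' w - borelTransform ν w = -l * (borelTransform ν' w * borelTransform ν w) := by
  obtain ⟨M, hKM, hMw⟩ := exists_between hKw
  have hae : ∀ᵐ y ∂ν, |y| ≤ M :=
    (ae_abs_lt_of_abs_integral_pow_le ν hK hKM hint hbd).mono fun _ h => h.le
  have hae' : ∀ᵐ y ∂ν', |y| ≤ M :=
    (ae_abs_lt_of_abs_integral_pow_le ν' hK hKM hint' hbd').mono fun _ h => h.le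
  have hbdC : ∀ ρ : Measure ℝ, (∀ n, |∫ x, x ^ n ∂ρ| ≤ C * K ^ n) →
      ∀ n, ‖((∫ x, x ^ n ∂ρ : ℝ) : ℂ)‖ ≤ C * K ^ n := fun ρ h n => by
    simpa only [Complex.norm_real, Real.norm_eq_abs] using h n
  have hrecC : ∀ n, ((∫ x, x ^ (n + 1) ∂ν' : ℝ) : ℂ) - ((∫ x, x ^ (n + 1) ∂ν : ℝ) : ℂ)
      = l * ∑ i ∈ Finset.range (n + 1),
          ((∫ x, x ^ i ∂ν' : ℝ) : ℂ) * ((∫ x, x ^ (n - i) ∂ν : ℝ) : ℂ) :=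
    fun n => by exact_mod_cast hrec n
  have key := sub_eq_mul_mul_of_hasSum_of_recurrence
    (hasSum_moment_mul_inv_pow ν' (hK.trans hKM.le) hMw hint' hae')
    (hasSum_moment_mul_inv_pow ν (hK.trans hKM.le) hMw hint hae)
    (summable_norm_mul_inv_pow hK hKw (hbdC ν' hbd'))
    (summable_norm_mul_inv_pow hK hKw (hbdC ν hbd))
    (by simp) hrecC
  linear_combination -key

theorem stmt_6_general {H : Type*} [NormedAddCommGroup H] [InnerProductSpace ℝ H]
    (A : H →L[ℝ] H) (φ : H)
    (μ : ℝ → Measure ℝ) (hprob : ∀ l : ℝ, IsProbabilityMeasure (μ l))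
    (hmom : ∀ (l : ℝ) (n : ℕ),
      Integrable (fun x : ℝ => x ^ n) (μ l) ∧
      ⟪φ, (((A + l • ((innerSL ℝ φ).smulRight φ)) ^ n) φ)⟫ = ∫ x, x ^ n ∂(μ l)) :
    ∀ (l : ℝ) (z : ℂ), 0 < z.im →
      (∫ y, ((y : ℂ) - z)⁻¹ ∂(μ l))
        = (∫ y, ((y : ℂ) - z)⁻¹ ∂(μ 0)) / (1 + l * ∫ y, ((y : ℂ) - z)⁻¹ ∂(μ 0)) := by
  intro l z hz
  have := hprob l
  have := hprob 0
  set K := max ‖A‖ ‖A + l • (innerSL ℝ φ).smulRight φ‖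
  have hmomA : ∀ n, ⟪φ, (A ^ n) φ⟫ = ∫ x, x ^ n ∂μ 0 := fun n => by simpa using (hmom 0 n).2
  have hmomT : ∀ n, ⟪φ, ((A + l • (innerSL ℝ φ).smulRight φ) ^ n) φ⟫ = ∫ x, x ^ n ∂μ l :=
    fun n => (hmom l n).2
  have hbound : ∀ S : H →L[ℝ] H, ‖S‖ ≤ K → ∀ n, |⟪φ, (S ^ n) φ⟫| ≤ ‖φ‖ ^ 2 * K ^ n :=
    fun S hS n => (norm_inner_pow_apply_le S φ n).trans (by gcongr)
  have hlarge : ∀ w : ℂ, K < ‖w‖ → borelTransform (μ l) w - borelTransform (μ 0) w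
      = -l * (borelTransform (μ l) w * borelTransform (μ 0) w) := fun w hKw =>
    borelTransform_sub_eq_of_moment_recurrence (μ 0) (μ l) ((norm_nonneg A).trans (le_max_left _ _))
      (fun n => (hmom 0 n).1) (fun n => (hmom l n).1)
      (fun n => hmomA n ▸ hbound A (le_max_left _ _) n)
      (fun n => hmomT n ▸ hbound _ (le_max_right _ _) n)
      (fun n => by simpa only [hmomA, hmomT] using inner_add_smul_rankOne_pow_succ_sub A φ l n) hKw
  have hF₀ := differentiableOn_borelTransform (μ 0)
  refine eqOn_upperHalfPlane_of_eq_of_lt_norm (R := K) (f := borelTransform (μ l))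
    (g := fun w => borelTransform (μ 0) w / (1 + l * borelTransform (μ 0) w))
    (differentiableOn_borelTransform (μ l))
    (hF₀.div ((differentiableOn_const 1).add ((differentiableOn_const _).mul hF₀))
      fun w hw => one_add_mul_borelTransform_ne_zero (μ 0) l hw) (fun w hw hKw => ?_) hz
  rw [eq_div_iff (one_add_mul_borelTransform_ne_zero (μ 0) l hw)]
  linear_combination hlarge w hKw

/-- The Aronszajn–Krein formula: `F_{μ_λ}(z) = F_μ(z) / (1 + λ F_μ(z))`. -/
theorem stmt_6 {H : Type*} [NormedAddCommGroup H] [InnerProductSpace ℝ H]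
    [CompleteSpace H] [TopologicalSpace.SeparableSpace H]
    (A : H →L[ℝ] H) (hA : IsSelfAdjoint A) (φ : H) (hφ : ‖φ‖ = 1)
    (μ : ℝ → Measure ℝ) (hprob : ∀ l : ℝ, IsProbabilityMeasure (μ l))
    (hmom : ∀ (l : ℝ) (n : ℕ),
      Integrable (fun x : ℝ => x ^ n) (μ l) ∧
      ⟪φ, (((A + l • ((innerSL ℝ φ).smulRight φ)) ^ n) φ)⟫ = ∫ x, x ^ n ∂(μ l)) :
    ∀ (l : ℝ) (z : ℂ), 0 < z.im →
      (∫ y, ((y : ℂ) - z)⁻¹ ∂(μ l))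
        = (∫ y, ((y : ℂ) - z)⁻¹ ∂(μ 0)) / (1 + l * ∫ y, ((y : ℂ) - z)⁻¹ ∂(μ 0)) :=
  stmt_6_general A φ μ hprob hmom
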